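/- Let E be a nonzero reflexive Banach space, B := E × E* with q(x,x*) := ⟨x,x*⟩, and f ∈ PC(E × E*) be a BC-function. Then P_q(f) is a maximally monotone subset of E × E*, P_q(f^@) = P_q(f), and P_q(f) − G(−J) = E × E*, where J is the duality map. -/

import Mathlib

open scoped Pointwise

noncomputable section

variable {E : Type*} [NormedAddCommGroup E] [NormedSpace ℝ E]

/-- `E` is reflexive: the canonical map into the double dual is surjective. -/
def ReflexiveSp (E : Type*) [NormedAddCommGroup E] [NormedSpace ℝ E] : Prop :=
  Function.Surjective (NormedSpace.inclusionInDoubleDual ℝ E)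

/-- The SSD pairing `⌊(x,x*),(y,y*)⌋ = ⟨x,y*⟩ + ⟨y,x*⟩` on `E × E*`. -/
def pairP (p r : E × StrongDual ℝ E) : ℝ := r.2 p.1 + p.2 r.1

/-- `q(x,x*) = ⟨x,x*⟩`. -/
def qP (p : E × StrongDual ℝ E) : ℝ := p.2 p.1

/-- The intrinsic conjugate `f^@(c) = sup_b (⌊b,c⌋ - f(b))` on `E × E*`. -/
def conjP (f : E × StrongDual ℝ E → EReal) (c : E × StrongDual ℝ E) : EReal :=
  ⨆ b : E × StrongDual ℝ E, ((pairP b c : ℝ) : EReal) - f b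

/-- A proper function into `(-∞,∞]`: never `⊥` and somewhere finite. -/
def ProperFnP (f : E × StrongDual ℝ E → EReal) : Prop :=
  (∀ p, f p ≠ ⊥) ∧ ∃ p, f p ≠ ⊤

/-- Convexity for `(-∞,∞]`-valued functions on `E × E*`. -/
def ConvexFnP (f : E × StrongDual ℝ E → EReal) : Prop :=
  ∀ p r : E × StrongDual ℝ E, ∀ t : ℝ, 0 ≤ t → t ≤ 1 →
    f (t • p + (1 - t) • r) ≤ (t : EReal) * f p + ((1 - t : ℝ) : EReal) * f r

/-- `P_q(f) = {b : f(b) = q(b)}`. -/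
def PqP (f : E × StrongDual ℝ E → EReal) : Set (E × StrongDual ℝ E) :=
  {p | f p = ((qP p : ℝ) : EReal)}

/-- `f` is a BC-function: `f^@(b) ≥ f(b) ≥ q(b)` for all `b`. -/
def IsBCP (f : E × StrongDual ℝ E → EReal) : Prop :=
  ∀ p : E × StrongDual ℝ E, ((qP p : ℝ) : EReal) ≤ f p ∧ f p ≤ conjP f p

/-- The effective domain of an `EReal`-valued function on `E × E*`. -/
def domP (f : E × StrongDual ℝ E → EReal) : Set (E × StrongDual ℝ E) :=
  {p | ∃ r : ℝ, f p = (r : EReal)}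

/-- A monotone subset of `E × E*`. -/
def MonoSet (A : Set (E × StrongDual ℝ E)) : Prop :=
  ∀ p ∈ A, ∀ r ∈ A, 0 ≤ (p.2 - r.2) (p.1 - r.1)

/-- A maximally monotone subset of `E × E*`. -/
def MaxMono (A : Set (E × StrongDual ℝ E)) : Prop :=
  A.Nonempty ∧ MonoSet A ∧ ∀ C : Set (E × StrongDual ℝ E), MonoSet C → A ⊆ C → C = A

/-- `G(-J) = {(x,x*) : ½‖x‖² + ½‖x*‖² = -⟨x,x*⟩}` where `J` is the duality map. -/
def GnegJ (E : Type*) [NormedAddCommGroup E] [NormedSpace ℝ E] :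
    Set (E × StrongDual ℝ E) :=
  {p | (1 / 2) * ‖p.1‖ ^ 2 + (1 / 2) * ‖p.2‖ ^ 2 = -(p.2 p.1)}

/-- The graph of a multifunction `S : E ⇉ E*`. -/
def graphOf (S : E → Set (StrongDual ℝ E)) : Set (E × StrongDual ℝ E) :=
  {p | p.2 ∈ S p.1}

/-- `S : E ⇉ E*` is maximally monotone. -/
def MaxMonoOp (S : E → Set (StrongDual ℝ E)) : Prop := MaxMono (graphOf S)

/-- The Fitzpatrick function of a multifunction `S : E ⇉ E*`:
`φ_S(x,x*) = sup_{(s,s*) ∈ G(S)} (⟨x,s*⟩ + ⟨s,x*⟩ - ⟨s,s*⟩)`. -/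
def fitz (S : E → Set (StrongDual ℝ E)) (p : E × StrongDual ℝ E) : EReal :=
  ⨆ s : graphOf S,
    (((s : E × StrongDual ℝ E).2 p.1 + p.2 (s : E × StrongDual ℝ E).1
      - (s : E × StrongDual ℝ E).2 (s : E × StrongDual ℝ E).1 : ℝ) : EReal)

/-- The domain `D(S) = {x : Sx ≠ ∅}` of a multifunction. -/
def domOp (S : E → Set (StrongDual ℝ E)) : Set E := {x | (S x).Nonempty}


/-!
Fix `b ∈ E × E*` and put `halfNormSq (x, x*) = ½‖x‖² + ½‖x*‖²`. The function
`g e = ⌊e, b⌋ - q b - halfNormSq (e - b)` is concave, continuous and below `q ≤ f`, so Hahn–Banach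
puts a continuous affine function `⌊·, c⌋ + t` between `g` and `f`; reflexivity is what lets its
linear part be written as `⌊·, c⌋`. Then `q c ≤ f c ≤ f^@ c ≤ -t`, while `g ≤ ⌊·, c⌋ + t` bounds
the conjugate of `halfNormSq` at `b - c`. As `-q ≤ halfNormSq ≤ halfNormSq^@`, all these
inequalities are equalities: `c ∈ P_q(f)` and `c - b ∈ G(-J)`.

This gives `P_q(f) - G(-J) = E × E*` and maximality: a monotone set containing `P_q(f)` and `b`
has `0 ≤ q (c - b) = -halfNormSq (c - b)`, so `c = b`. Monotonicity of `P_q(f)` and `f^@ = q` on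
`P_q(f)` come from convexity of `f` on segments ending in `P_q(f)`.
-/

open Set Filter Topology

theorem exists_affine_between {V : Type*} [TopologicalSpace V] [AddCommGroup V] [Module ℝ V]
    [IsTopologicalAddGroup V] [ContinuousSMul ℝ V] {f : V → EReal} {g : V → ℝ}
    (hf : Convex ℝ {p : V × ℝ | f p.1 ≤ p.2}) (hf_fin : ∃ x, f x ≠ ⊤)
    (hg : ConcaveOn ℝ univ g) (hg_cont : Continuous g) (hgf : ∀ x, (g x : EReal) ≤ f x) :
    ∃ (ℓ : StrongDual ℝ V) (c : ℝ), ∀ x, g x ≤ ℓ x + c ∧ ((ℓ x + c : ℝ) : EReal) ≤ f x := by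
  have hS : Convex ℝ {p : V × ℝ | p.2 < g p.1} := by
    simpa only [mem_univ, true_and] using hg.convex_strict_hypograph
  have hS_open : IsOpen {p : V × ℝ | p.2 < g p.1} :=
    isOpen_lt continuous_snd (hg_cont.comp continuous_fst)
  have hST : Disjoint {p : V × ℝ | p.2 < g p.1} {p : V × ℝ | f p.1 ≤ p.2} :=
    disjoint_left.mpr fun p hpS hpT =>
      (EReal.coe_lt_coe_iff.mpr hpS).not_ge ((hgf p.1).trans hpT)
  obtain ⟨φ, u, hφS, hφT⟩ := geometric_hahn_banach_open hS hS_open hf hST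
  set s := φ (0, 1)
  have hφ (x : V) (t : ℝ) : φ (x, t) = φ (x, 0) + t * s := by
    rw [← smul_eq_mul, ← map_smul, ← map_add]; simp
  have hT {x : V} {r : ℝ} (hx : f x = r) : u ≤ φ (x, 0) + r * s := hφ x r ▸ hφT _ hx.le
  have hS' (x : V) {t : ℝ} (ht : t < g x) : φ (x, 0) + t * s < u := hφ x t ▸ hφS _ ht
  have hreal {x : V} (hx : f x ≠ ⊤) : f x = (f x).toReal :=
    (EReal.coe_toReal hx (ne_bot_of_le_ne_bot (EReal.coe_ne_bot _) (hgf x))).symm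
  obtain ⟨x₀, hx₀⟩ := hf_fin
  have hx₀' := hreal hx₀
  have hs : 0 < s := by
    have h₁ := hS' x₀ (sub_one_lt (g x₀))
    have h₂ := hT hx₀'
    have h₃ : g x₀ ≤ (f x₀).toReal := EReal.coe_le_coe_iff.mp (hx₀' ▸ hgf x₀)
    nlinarith
  set ℓ : StrongDual ℝ V := -s⁻¹ • φ.comp (ContinuousLinearMap.inl ℝ V ℝ)
  have hℓ (x : V) : ℓ x + u / s = (u - φ (x, 0)) / s := by
    simp only [ℓ, smul_apply, ContinuousLinearMap.comp_apply,
      ContinuousLinearMap.inl_apply, smul_eq_mul]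
    field_simp
    ring
  refine ⟨ℓ, u / s, fun x => ⟨?_, ?_⟩⟩
  · refine le_of_forall_pos_lt_add fun ε hε => ?_
    have := hS' x (sub_lt_self (g x) hε)
    rw [hℓ, ← sub_lt_iff_lt_add, lt_div_iff₀ hs]
    linarith
  · rcases eq_or_ne (f x) ⊤ with hx | hx
    · exact hx ▸ le_top
    have hx' := hreal hx
    have := hT hx'
    rw [hx', hℓ, EReal.coe_le_coe_iff, div_le_iff₀ hs]
    linarith

def halfNormSq (p : E × StrongDual ℝ E) : ℝ := (1 / 2) * ‖p.1‖ ^ 2 + (1 / 2) * ‖p.2‖ ^ 2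

lemma mem_GnegJ_iff {p : E × StrongDual ℝ E} : p ∈ GnegJ E ↔ halfNormSq p = -qP p := Iff.rfl

lemma pairP_comm (p r : E × StrongDual ℝ E) : pairP p r = pairP r p := add_comm _ _

lemma qP_sub (p r : E × StrongDual ℝ E) : qP (p - r) = qP p - pairP p r + qP r := by
  simp only [qP, pairP, Prod.fst_sub, Prod.snd_sub, sub_apply, map_sub]
  ring

lemma qP_neg (p : E × StrongDual ℝ E) : qP (-p) = qP p := by simp [qP]

lemma halfNormSq_neg (p : E × StrongDual ℝ E) : halfNormSq (-p) = halfNormSq p := by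
  simp [halfNormSq]

lemma neg_qP_le_halfNormSq (p : E × StrongDual ℝ E) : -qP p ≤ halfNormSq p := by
  have h := (abs_le.mp ((Real.norm_eq_abs _).symm.trans_le (p.2.le_opNorm p.1))).1
  unfold qP halfNormSq
  nlinarith [sq_nonneg (‖p.1‖ - ‖p.2‖)]

lemma eq_zero_of_halfNormSq_nonpos {p : E × StrongDual ℝ E} (h : halfNormSq p ≤ 0) : p = 0 := by
  unfold halfNormSq at h
  have h1 : ‖p.1‖ = 0 := by nlinarith [sq_nonneg ‖p.1‖, sq_nonneg ‖p.2‖, norm_nonneg p.1]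
  have h2 : ‖p.2‖ = 0 := by nlinarith [sq_nonneg ‖p.1‖, sq_nonneg ‖p.2‖, norm_nonneg p.2]
  exact Prod.ext (norm_eq_zero.mp h1) (norm_eq_zero.mp h2)

lemma convexOn_halfNormSq : ConvexOn ℝ univ (halfNormSq : E × StrongDual ℝ E → ℝ) := by
  have h₁ : ConvexOn ℝ univ fun x : E => (1 / 2 : ℝ) * ‖x‖ ^ 2 :=
    (convexOn_univ_norm.pow (fun _ _ => norm_nonneg _) 2).smul (by norm_num)
  have h₂ : ConvexOn ℝ univ fun x : StrongDual ℝ E => (1 / 2 : ℝ) * ‖x‖ ^ 2 :=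
    (convexOn_univ_norm.pow (fun _ _ => norm_nonneg _) 2).smul (by norm_num)
  exact (h₁.comp_linearMap (LinearMap.fst ℝ E _)).add (h₂.comp_linearMap (LinearMap.snd ℝ E _))

lemma continuous_halfNormSq : Continuous (halfNormSq : E × StrongDual ℝ E → ℝ) := by
  unfold halfNormSq; fun_prop

def pairL (c : E × StrongDual ℝ E) : StrongDual ℝ (E × StrongDual ℝ E) :=
  c.2.comp (ContinuousLinearMap.fst ℝ E _) +
    (ContinuousLinearMap.apply ℝ ℝ c.1).comp (ContinuousLinearMap.snd ℝ E _)

@[simp] lemma pairL_apply (c p : E × StrongDual ℝ E) : pairL c p = pairP p c := rfl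

lemma ReflexiveSp.exists_pairL_eq (hrefl : ReflexiveSp E)
    (φ : StrongDual ℝ (E × StrongDual ℝ E)) : ∃ c, pairL c = φ := by
  obtain ⟨w, hw⟩ := hrefl (φ.comp (ContinuousLinearMap.inr ℝ E _))
  refine ⟨(w, φ.comp (ContinuousLinearMap.inl ℝ E _)), ContinuousLinearMap.ext fun p => ?_⟩
  have hw' : p.2 w = φ (0, p.2) := congrArg (fun F => F p.2) hw
  rw [pairL_apply, pairP, hw', ContinuousLinearMap.comp_apply, ← map_add]
  simp

lemma ReflexiveSp.exists_norm_le_one_apply_eq_norm (hrefl : ReflexiveSp E)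
    (φ : StrongDual ℝ E) : ∃ x : E, ‖x‖ ≤ 1 ∧ φ x = ‖φ‖ := by
  obtain ⟨Φ, hΦ, hΦφ⟩ := exists_dual_vector'' ℝ φ
  obtain ⟨x, rfl⟩ := hrefl Φ
  exact ⟨x, (NormedSpace.inclusionInDoubleDualLi ℝ (E := E)).norm_map x ▸ hΦ, hΦφ⟩

lemma ReflexiveSp.halfNormSq_le_of_forall_pairP_sub_le (hrefl : ReflexiveSp E)
    {c : E × StrongDual ℝ E} {K : ℝ} (h : ∀ d, pairP d c - halfNormSq d ≤ K) :
    halfNormSq c ≤ K := by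
  obtain ⟨x, hx, hx'⟩ := hrefl.exists_norm_le_one_apply_eq_norm c.2
  obtain ⟨y, hy, hy'⟩ := exists_dual_vector'' ℝ c.1
  replace hy' : y c.1 = ‖c.1‖ := hy'
  have hd := h (‖c.2‖ • x, ‖c.1‖ • y)
  simp only [pairP, halfNormSq, map_smul, smul_apply, smul_eq_mul, norm_smul, norm_norm, hx',
    hy'] at hd ⊢
  have hx2 : ‖x‖ ^ 2 ≤ 1 := pow_le_one₀ (norm_nonneg x) hx
  have hy2 : ‖y‖ ^ 2 ≤ 1 := pow_le_one₀ (norm_nonneg y) hy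
  nlinarith [mul_le_mul_of_nonneg_left hx2 (sq_nonneg ‖c.2‖),
    mul_le_mul_of_nonneg_left hy2 (sq_nonneg ‖c.1‖)]

lemma ConvexFnP.convex_epigraph {f : E × StrongDual ℝ E → EReal} (hconv : ConvexFnP f) :
    Convex ℝ {p : (E × StrongDual ℝ E) × ℝ | f p.1 ≤ p.2} := by
  rintro p (hp : f p.1 ≤ p.2) q (hq : f q.1 ≤ q.2) a b ha hb hab
  obtain rfl : b = 1 - a := by linarith
  show f (a • p.1 + (1 - a) • q.1) ≤ ((a * p.2 + (1 - a) * q.2 : ℝ) : EReal)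
  calc f (a • p.1 + (1 - a) • q.1) ≤ (a : EReal) * f p.1 + ((1 - a : ℝ) : EReal) * f q.1 :=
        hconv p.1 q.1 a ha (by linarith)
    _ ≤ (a : EReal) * p.2 + ((1 - a : ℝ) : EReal) * q.2 := by gcongr
    _ = ((a * p.2 + (1 - a) * q.2 : ℝ) : EReal) := by push_cast; rfl

lemma pairP_le_of_mem_PqP {f : E × StrongDual ℝ E → EReal}
    (hq : ∀ p, ((qP p : ℝ) : EReal) ≤ f p) (hconv : ConvexFnP f)
    {b : E × StrongDual ℝ E} (hb : b ∈ PqP f) {c : E × StrongDual ℝ E} {r : ℝ}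
    (hc : f c = r) : pairP c b ≤ r + qP b := by
  set A := pairP c b - qP b - r
  set B := qP (c - b)
  have hsegment : ∀ t ∈ Ioo (0 : ℝ) 1, A + t * B ≤ 0 := by
    rintro t ⟨ht₀, ht₁⟩
    have h := hconv c b t ht₀.le ht₁.le
    rw [hc, hb, ← EReal.coe_mul, ← EReal.coe_mul, ← EReal.coe_add] at h
    have h' := EReal.coe_le_coe_iff.mp ((hq _).trans h)
    have hexp : qP (t • c + (1 - t) • b) = (1 - t) * qP b + t * r + t * (A + t * B) := by
      simp only [A, B, qP_sub, qP, pairP, Prod.fst_add, Prod.snd_add, Prod.smul_fst, Prod.smul_snd,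
        add_apply, smul_apply, map_add, map_smul, smul_eq_mul]
      ring
    rw [hexp] at h'
    nlinarith
  have hlim : Tendsto (fun t => A + t * B) (𝓝[>] 0) (𝓝 A) :=
    ((by fun_prop : Continuous fun t : ℝ => A + t * B).tendsto' 0 A (by simp)).mono_left
      nhdsWithin_le_nhds
  have hA := le_of_tendsto hlim (eventually_of_mem (Ioo_mem_nhdsGT one_pos) hsegment)
  linarith

lemma conjP_le_qP_of_mem_PqP {f : E × StrongDual ℝ E → EReal}
    (hq : ∀ p, ((qP p : ℝ) : EReal) ≤ f p) (hconv : ConvexFnP f)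
    {b : E × StrongDual ℝ E} (hb : b ∈ PqP f) : conjP f b ≤ qP b := by
  refine iSup_le fun c => ?_
  rcases eq_or_ne (f c) ⊤ with hc | hc
  · rw [hc, EReal.sub_top]
    exact bot_le
  have hc' : f c = (f c).toReal :=
    (EReal.coe_toReal hc (ne_bot_of_le_ne_bot (EReal.coe_ne_bot _) (hq c))).symm
  rw [hc', ← EReal.coe_sub, EReal.coe_le_coe_iff, sub_le_iff_le_add']
  exact pairP_le_of_mem_PqP hq hconv hb hc'

lemma PqP_conjP_eq {f : E × StrongDual ℝ E → EReal} (hconv : ConvexFnP f) (hbc : IsBCP f) :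
    PqP (conjP f) = PqP f := by
  have hq p : ((qP p : ℝ) : EReal) ≤ f p := (hbc p).1
  ext p
  constructor
  · intro hp
    exact le_antisymm ((hbc p).2.trans hp.le) (hq p)
  · intro hp
    exact le_antisymm (conjP_le_qP_of_mem_PqP hq hconv hp) ((hq p).trans (hbc p).2)

lemma monoSet_PqP {f : E × StrongDual ℝ E → EReal}
    (hq : ∀ p, ((qP p : ℝ) : EReal) ≤ f p) (hconv : ConvexFnP f) : MonoSet (PqP f) := by
  intro p hp r hr
  have h := pairP_le_of_mem_PqP hq hconv hr hp
  have hsub : (p.2 - r.2) (p.1 - r.1) = qP (p - r) := rfl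
  rw [hsub, qP_sub]
  linarith

lemma maxMono_of_forall_exists_sub_mem_GnegJ {A : Set (E × StrongDual ℝ E)} (hA : MonoSet A)
    (h : ∀ b, ∃ a ∈ A, a - b ∈ GnegJ E) : MaxMono A := by
  refine ⟨(h 0).imp fun a ha => ha.1, hA, fun C hC hAC => (subset_antisymm ?_ hAC)⟩
  intro b hb
  obtain ⟨a, ha, hab⟩ := h b
  have hmono : 0 ≤ qP (a - b) := hC a (hAC ha) b hb
  rw [mem_GnegJ_iff] at hab
  obtain rfl : a = b := sub_eq_zero.mp (eq_zero_of_halfNormSq_nonpos (by linarith))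
  exact ha

theorem exists_mem_PqP_sub_mem_GnegJ (hrefl : ReflexiveSp E) {f : E × StrongDual ℝ E → EReal}
    (hproper : ProperFnP f) (hconv : ConvexFnP f) (hbc : IsBCP f) (b : E × StrongDual ℝ E) :
    ∃ a ∈ PqP f, a - b ∈ GnegJ E := by
  have hq p : ((qP p : ℝ) : EReal) ≤ f p := (hbc p).1
  set g : E × StrongDual ℝ E → ℝ := fun e => pairP e b - qP b - halfNormSq (e - b)
  have hg_le e : (g e : EReal) ≤ f e := by
    refine (EReal.coe_le_coe_iff.mpr ?_).trans (hq e)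
    have := neg_qP_le_halfNormSq (e - b)
    rw [qP_sub] at this
    linarith
  have hg_conc : ConcaveOn ℝ univ g := by
    have h₁ : ConvexOn ℝ univ fun e => halfNormSq (e - b) := by
      simpa [Function.comp_def, neg_add_eq_sub] using convexOn_halfNormSq.translate_right (-b)
    have h₂ : ConcaveOn ℝ univ fun e => pairL b e + -qP b :=
      ((pairL b).toLinearMap.concaveOn convex_univ).add_const (-qP b)
    have hg : g = (fun e => pairL b e + -qP b) - fun e => halfNormSq (e - b) := by
      ext e
      simp [g, sub_eq_add_neg]
    exact hg ▸ h₂.sub h₁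
  have hg_cont : Continuous g :=
    ((pairL b).continuous.sub continuous_const).sub
      (continuous_halfNormSq.comp (continuous_id.sub continuous_const))
  obtain ⟨ℓ, t, hℓ⟩ := exists_affine_between hconv.convex_epigraph hproper.2 hg_conc hg_cont hg_le
  obtain ⟨c, rfl⟩ := hrefl.exists_pairL_eq ℓ
  have hconj : conjP f c ≤ ((-t : ℝ) : EReal) := iSup_le fun e => by
    refine EReal.sub_le_of_le_add ?_
    calc ((pairP e c : ℝ) : EReal) = ((-t : ℝ) : EReal) + ((pairL c e + t : ℝ) : EReal) := by
          rw [← EReal.coe_add, pairL_apply]; ring_nf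
      _ ≤ ((-t : ℝ) : EReal) + f e := add_le_add_right (hℓ e).2 _
  have hqc : qP c ≤ -t := EReal.coe_le_coe_iff.mp ((hq c).trans ((hbc c).2.trans hconj))
  have hdual d : pairP d (b - c) - halfNormSq d ≤ t + pairP b c - qP b := by
    have := (hℓ (b + d)).1
    simp only [g, pairL_apply, add_sub_cancel_left] at this
    simp only [pairP, qP, Prod.fst_add, Prod.snd_add, Prod.fst_sub, Prod.snd_sub, map_add,
      map_sub, add_apply, sub_apply] at this ⊢
    linarith
  have hle := hrefl.halfNormSq_le_of_forall_pairP_sub_le hdual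
  have hge := neg_qP_le_halfNormSq (b - c)
  rw [qP_sub, pairP_comm b c] at hge
  rw [pairP_comm b c] at hle
  have hqc' : qP c = -t := by linarith
  refine ⟨c, le_antisymm ((hbc c).2.trans (hconj.trans_eq (by rw [hqc']))) (hq c), ?_⟩
  rw [mem_GnegJ_iff, ← neg_sub, halfNormSq_neg, qP_neg, qP_sub, pairP_comm b c]
  linarith

theorem stmt12_general (hrefl : ReflexiveSp E)
    (f : E × StrongDual ℝ E → EReal)
    (hproper : ProperFnP f) (hconv : ConvexFnP f) (hbc : IsBCP f) :
    MaxMono (PqP f) ∧ PqP (conjP f) = PqP f ∧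
      PqP f - GnegJ E = (Set.univ : Set (E × StrongDual ℝ E)) := by
  have hsurj := exists_mem_PqP_sub_mem_GnegJ hrefl hproper hconv hbc
  refine ⟨maxMono_of_forall_exists_sub_mem_GnegJ (monoSet_PqP (fun p => (hbc p).1) hconv) hsurj,
    PqP_conjP_eq hconv hbc, eq_univ_of_forall fun b => ?_⟩
  obtain ⟨a, ha, hab⟩ := hsurj b
  exact ⟨a, ha, a - b, hab, sub_sub_cancel a b⟩

/-- if `E` is a nonzero reflexive Banach space and `f ∈ PC(E × E*)` is a
BC-function, then `P_q(f)` is maximally monotone, `P_q(f^@) = P_q(f)` and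
`P_q(f) - G(-J) = E × E*`. -/
theorem stmt12 [CompleteSpace E] [Nontrivial E] (hrefl : ReflexiveSp E)
    (f : E × StrongDual ℝ E → EReal)
    (hproper : ProperFnP f) (hconv : ConvexFnP f) (hbc : IsBCP f) :
    MaxMono (PqP f) ∧ PqP (conjP f) = PqP f ∧
      PqP f - GnegJ E = (Set.univ : Set (E × StrongDual ℝ E)) :=
  stmt12_general hrefl f hproper hconv hbc
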